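/- Let K be a closed subset of [0,1]. A random vector (X₁,…,X_d) of real random variables on Ω is K-concentrated if and only if it is 𝒱(K)-comonotonic. -/

import Mathlib

open MeasureTheory Filter Set

section Defs

variable {Ω : Type*} [MeasurableSpace Ω]

/-- An atomless probability space: every event can be split to achieve any smaller measure
(Sierpiński's property, equivalent to atomlessness for probability measures). -/
def Atomless (P : Measure Ω) : Prop :=
  ∀ A : Set Ω, MeasurableSet A → ∀ r : ENNReal, r ≤ P A →
    ∃ B : Set Ω, B ⊆ A ∧ MeasurableSet B ∧ P B = r

/-- `A` is a tail event for `X`: outside a null set, `X ω ≥ X ω'` for `ω ∈ A`, `ω' ∈ Aᶜ`. -/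
def IsTailEvent (P : Measure Ω) (X : Ω → ℝ) (A : Set Ω) : Prop :=
  MeasurableSet A ∧ ∃ N : Set Ω, P N = 0 ∧
    ∀ ω ∈ A, ω ∉ N → ∀ ω' ∈ Aᶜ, ω' ∉ N → X ω' ≤ X ω

/-- `A` is a `p`-tail event for `X`: a tail event with `P A = 1 - p`. -/
def IsPTailEvent (P : Measure Ω) (X : Ω → ℝ) (p : ℝ) (A : Set Ω) : Prop :=
  IsTailEvent P X A ∧ P A = ENNReal.ofReal (1 - p)

/-- A random vector is `p`-concentrated if a single event is a `p`-tail event for every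
component. -/
def PConcentrated (P : Measure Ω) {d : ℕ} (X : Fin d → Ω → ℝ) (p : ℝ) : Prop :=
  ∃ A : Set Ω, ∀ i, IsPTailEvent P (X i) p A

/-- A random vector is `K`-concentrated if it is `p`-concentrated for every `p ∈ K`. -/
def KConcentrated (P : Measure Ω) {d : ℕ} (X : Fin d → Ω → ℝ) (K : Set ℝ) : Prop :=
  ∀ p ∈ K, PConcentrated P X p

/-- Left quantile function `Q_X⁻(p) = inf {x | ℙ(X ≤ x) ≥ p}` (also `VaR_p`). -/
noncomputable def leftQuantile (P : Measure Ω) (X : Ω → ℝ) (p : ℝ) : ℝ :=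
  sInf {x : ℝ | ENNReal.ofReal p ≤ P {ω | X ω ≤ x}}

/-- Right quantile function `Q_X⁺(p) = inf {x | ℙ(X ≤ x) > p}` (also `VaR⁺_p`). -/
noncomputable def rightQuantile (P : Measure Ω) (X : Ω → ℝ) (p : ℝ) : ℝ :=
  sInf {x : ℝ | ENNReal.ofReal p < P {ω | X ω ≤ x}}

/-- `Q_X : [0,1] → ℝ`, equal to `Q_X⁺` at `0` and to `Q_X⁻` on `(0,1]`. -/
noncomputable def Q (P : Measure Ω) (X : Ω → ℝ) (p : ℝ) : ℝ :=
  if p = 0 then rightQuantile P X 0 else leftQuantile P X p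

/-- Membership in L∞: essentially bounded (and measurable) random variables. -/
def MemLinf (P : Measure Ω) (X : Ω → ℝ) : Prop :=
  Measurable X ∧ ∃ C : ℝ, ∀ᵐ ω ∂P, |X ω| ≤ C

/-- A functional `ρ` on L∞ is `K`-additive if it is additive on every `K`-concentrated
random vector (of dimension `d ≥ 2`) with essentially bounded components. -/
def KAdditive (P : Measure Ω) (K : Set ℝ) (ρ : (Ω → ℝ) → ℝ) : Prop :=
  ∀ d : ℕ, 2 ≤ d → ∀ X : Fin d → Ω → ℝ, (∀ i, MemLinf P (X i)) →
    KConcentrated P X K → ρ (∑ i, X i) = ∑ i, ρ (X i)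

/-- A pair of random variables is comonotonic. -/
def ComonotonePair (P : Measure Ω) (X Z : Ω → ℝ) : Prop :=
  ∀ᵐ w ∂(P.prod P), 0 ≤ (X w.1 - X w.2) * (Z w.1 - Z w.2)

/-- A random vector is `g`-comonotonic: some random variable `Z` with quantile function `g`
on `[0,1]` is comonotonic with every component. -/
def GComonotone (P : Measure Ω) {d : ℕ} (g : ℝ → ℝ) (X : Fin d → Ω → ℝ) : Prop :=
  ∃ Z : Ω → ℝ, Measurable Z ∧ (∀ p ∈ Icc (0:ℝ) 1, Q P Z p = g p) ∧
    ∀ i, ComonotonePair P (X i) Z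

/-- A functional `ρ` on L∞ is `g`-additive if it is additive on every `g`-comonotonic
random vector (of dimension `d ≥ 2`) with essentially bounded components. -/
def GAdditive (P : Measure Ω) (g : ℝ → ℝ) (ρ : (Ω → ℝ) → ℝ) : Prop :=
  ∀ d : ℕ, 2 ≤ d → ∀ X : Fin d → Ω → ℝ, (∀ i, MemLinf P (X i)) →
    GComonotone P g X → ρ (∑ i, X i) = ∑ i, ρ (X i)

/-- The distortion riskmetric `I_h`. -/
noncomputable def distortionRM (P : Measure Ω) (h : ℝ → ℝ) (X : Ω → ℝ) : ℝ :=
  (∫ x in Iio (0:ℝ), (h ((P {ω | x < X ω}).toReal) - h 1)) +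
    ∫ x in Ioi (0:ℝ), h ((P {ω | x < X ω}).toReal)

/-- The spectral risk measure `ρ_g(X) = ∫₀¹ g(t) Q_X(t) dt`. -/
noncomputable def specRM (P : Measure Ω) (g : ℝ → ℝ) (X : Ω → ℝ) : ℝ :=
  ∫ t in (0:ℝ)..1, g t * Q P X t

/-- Expected Shortfall at level `p`. -/
noncomputable def ES (P : Measure Ω) (p : ℝ) (X : Ω → ℝ) : ℝ :=
  (1 - p)⁻¹ * ∫ q in p..1, leftQuantile P X q

end Defs

/-- The class 𝒢 of increasing functions on `[0,1]`, right-continuous at `0` and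
left-continuous on `(0,1]`. -/
def MemG (g : ℝ → ℝ) : Prop :=
  MonotoneOn g (Icc 0 1) ∧
    Tendsto g (nhdsWithin 0 (Ioi 0)) (nhds (g 0)) ∧
    ∀ p ∈ Ioc (0:ℝ) 1, Tendsto g (nhdsWithin p (Iio p)) (nhds (g p))

/-- `p` is a point of strict increase on the right of `g`. -/
def IsPSIR (g : ℝ → ℝ) (p : ℝ) : Prop :=
  p ∈ Ico (0:ℝ) 1 ∧ ∀ s ∈ Ioc p 1, g p < g s

/-- `p` is a point of strict increase on the left of `g`. -/
def IsPSIL (g : ℝ → ℝ) (p : ℝ) : Prop :=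
  p ∈ Ioc (0:ℝ) 1 ∧ ∀ s ∈ Ico (0:ℝ) p, g s < g p

/-- The set of points of strict increase of `g`. -/
def PSI (g : ℝ → ℝ) : Set ℝ :=
  {p | IsPSIR g p ∨ IsPSIL g p}

/-- `f ≾ g`: there is an increasing `h` with `f = h ∘ g` a.e. on `[0,1]`. -/
def Prec (f g : ℝ → ℝ) : Prop :=
  ∃ h : ℝ → ℝ, Monotone h ∧
    ∀ᵐ t ∂(volume.restrict (Icc (0:ℝ) 1)), f t = h (g t)

/-- The map `𝒱 : K ↦ (p ↦ sup ((0,p) ∩ K))` (with `sup ∅ = 0`, the junk value of `sSup` in `ℝ`). -/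
noncomputable def VK (K : Set ℝ) (p : ℝ) : ℝ :=
  sSup (Ioo (0:ℝ) p ∩ K)

/-- A risk spectrum: a nonnegative element of 𝒢 integrating to 1. -/
def IsRiskSpectrum (g : ℝ → ℝ) : Prop :=
  MemG g ∧ (∀ t ∈ Icc (0:ℝ) 1, 0 ≤ g t) ∧ (∫ t in (0:ℝ)..1, g t) = 1

/-!
For the forward direction, fix a countable dense set `D ⊆ K ∩ (0, 1)`. Two common tail events
can only differ, up to null sets, where every component is essentially constant, so on an
atomless space the `p`-tail events given by concentration can be cut and pasted, one level at a
time, into a decreasing chain `(A q)_{q ∈ D}` of common tail events with `P(A q) = 1 - q`. The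
random level `Z = sup {q ∈ D | ω ∈ A q}` is comonotonic with every component, and
`P(Z > x) = sup {1 - q | q ∈ D, q > x}`, so the quantile function of `Z` is `𝒱(D) = 𝒱(K)`.

Conversely, let `Z` be comonotonic with every component, with `Q_Z = 𝒱(K)`. For `p ∈ K ∩ (0, 1)`
and `c = 𝒱(K)(p)`, one of `{Z ≥ c}` and `{Z > c}` has probability `1 - p`, since `𝒱(K)` is not
constant around a point of `K`; and an event on which `Z` lies strictly above its complement is
a tail event for every variable comonotonic with `Z`.
-/

section TailEvents

variable {Ω : Type*} [MeasurableSpace Ω] {P : Measure Ω} {Y : Ω → ℝ} {A B C E : Set Ω}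

theorem exists_common_null_of_isTailEvent {ι : Type*} [Countable ι] {Y : ι → Ω → ℝ}
    {A : ι → Set Ω} (h : ∀ i, IsTailEvent P (Y i) (A i)) :
    ∃ N, P N = 0 ∧ ∀ i, ∀ ω ∈ A i, ω ∉ N → ∀ ω' ∈ (A i)ᶜ, ω' ∉ N → Y i ω' ≤ Y i ω := by
  choose _ N hN0 hN using h
  refine ⟨⋃ i, N i, measure_iUnion_null hN0, fun i ω hω hωN ω' hω' hω'N => ?_⟩
  simp only [mem_iUnion, not_exists] at hωN hω'N
  exact hN i ω hω (hωN i) ω' hω' (hω'N i)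

theorem IsTailEvent.iInter {ι : Type*} [Countable ι] {A : ι → Set Ω}
    (h : ∀ i, IsTailEvent P Y (A i)) : IsTailEvent P Y (⋂ i, A i) := by
  obtain ⟨N, hN0, hN⟩ := exists_common_null_of_isTailEvent h
  refine ⟨.iInter fun i => (h i).1, N, hN0, fun ω hω hωN ω' hω' hω'N => ?_⟩
  obtain ⟨i, hi⟩ : ∃ i, ω' ∉ A i := by simpa using hω'
  exact hN i ω (mem_iInter.1 hω i) hωN ω' hi hω'N

theorem IsTailEvent.iUnion {ι : Type*} [Countable ι] {A : ι → Set Ω}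
    (h : ∀ i, IsTailEvent P Y (A i)) : IsTailEvent P Y (⋃ i, A i) := by
  obtain ⟨N, hN0, hN⟩ := exists_common_null_of_isTailEvent h
  refine ⟨.iUnion fun i => (h i).1, N, hN0, fun ω hω hωN ω' hω' hω'N => ?_⟩
  obtain ⟨i, hi⟩ := mem_iUnion.1 hω
  exact hN i ω hi hωN ω' (fun h' => hω' (mem_iUnion_of_mem i h')) hω'N

theorem IsTailEvent.inter (hA : IsTailEvent P Y A) (hB : IsTailEvent P Y B) :
    IsTailEvent P Y (A ∩ B) :=
  inter_eq_iInter ▸ IsTailEvent.iInter fun b => by cases b <;> assumption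

theorem IsTailEvent.compl_neg (h : IsTailEvent P Y A) : IsTailEvent P (fun ω => -Y ω) Aᶜ := by
  obtain ⟨hA, N, hN0, hN⟩ := h
  refine ⟨hA.compl, N, hN0, fun ω hω hωN ω' hω' hω'N => ?_⟩
  rw [compl_compl] at hω'
  exact neg_le_neg (hN ω' hω' hω'N ω hω hωN)

/-- A point of `A \ B` lies above `B \ A` (tail property of `A`) and below it (tail property
of `B`). -/
theorem IsTailEvent.exists_null_le_on_sdiff (hA : IsTailEvent P Y A) (hB : IsTailEvent P Y B)
    (hAB : P (A \ B) ≠ 0) :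
    ∃ N, P N = 0 ∧ ∀ ω ∈ B \ A, ω ∉ N → ∀ ω' ∈ B \ A, ω' ∉ N → Y ω' ≤ Y ω := by
  obtain ⟨-, NA, hNA0, hNA⟩ := hA
  obtain ⟨-, NB, hNB0, hNB⟩ := hB
  have hN0 : P (NA ∪ NB) = 0 := measure_union_null hNA0 hNB0
  obtain ⟨ω₀, ⟨hω₀A, hω₀B⟩, hω₀N⟩ := nonempty_of_measure_ne_zero
    (show P ((A \ B) \ (NA ∪ NB)) ≠ 0 by rwa [measure_sdiff_null hN0])
  rw [mem_union, not_or] at hω₀N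
  refine ⟨NA ∪ NB, hN0, fun ω hω hωN ω' hω' hω'N => ?_⟩
  rw [mem_union, not_or] at hωN hω'N
  exact (hNA ω₀ hω₀A hω₀N.1 ω' hω'.2 hω'N.1).trans (hNB ω hω.1 hωN.2 ω₀ hω₀B hω₀N.2)

theorem IsTailEvent.of_subset_of_subset (hC : IsTailEvent P Y C) (hE : IsTailEvent P Y E)
    (hB : MeasurableSet B) (hCB : C ⊆ B) (hBE : B ⊆ E)
    (hgap : ∃ N, P N = 0 ∧ ∀ ω ∈ E \ C, ω ∉ N → ∀ ω' ∈ E \ C, ω' ∉ N → Y ω' ≤ Y ω) :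
    IsTailEvent P Y B := by
  obtain ⟨-, NC, hNC0, hNC⟩ := hC
  obtain ⟨-, NE, hNE0, hNE⟩ := hE
  obtain ⟨N, hN0, hN⟩ := hgap
  refine ⟨hB, NC ∪ NE ∪ N, measure_union_null (measure_union_null hNC0 hNE0) hN0,
    fun ω hω hωN ω' hω' hω'N => ?_⟩
  simp only [mem_union, not_or] at hωN hω'N
  have hω'C : ω' ∉ C := fun h => hω' (hCB h)
  by_cases hωC : ω ∈ C
  · exact hNC ω hωC hωN.1.1 ω' hω'C hω'N.1.1
  by_cases hω'E : ω' ∈ E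
  · exact hN ω ⟨hBE hω, hωC⟩ hωN.2 ω' ⟨hω'E, hω'C⟩ hω'N.2
  · exact hNE ω (hBE hω) hωN.1.2 ω' hω'E hω'N.1.2

end TailEvents

section Comonotone

variable {Ω : Type*} [MeasurableSpace Ω] {P : Measure Ω} {Y Z : Ω → ℝ}

theorem IsTailEvent.of_comonotonePair [SFinite P] (hco : ComonotonePair P Y Z) {A : Set Ω}
    (hA : MeasurableSet A) (hsep : ∀ ω ∈ A, ∀ ω' ∈ Aᶜ, Z ω' < Z ω) : IsTailEvent P Y A := by
  classical
  -- For each rational `r`, the rectangle `(A ∩ {Y < r}) × (Aᶜ ∩ {r < Y})` only contains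
  -- discordant pairs, so one of its sides is null.
  have hnull : ∀ r : ℚ, P (A ∩ {ω | Y ω < r}) = 0 ∨ P (Aᶜ ∩ {ω | r < Y ω}) = 0 := by
    intro r
    rw [← mul_eq_zero, ← Measure.prod_prod]
    refine measure_mono_null ?_ (ae_iff.1 hco)
    rintro ⟨ω, ω'⟩ ⟨⟨hωA, hωr⟩, hω'A, hω'r⟩
    simp only [mem_ofPred_eq, not_le] at hωr hω'r ⊢
    exact mul_neg_of_neg_of_pos (by linarith) (sub_pos.2 (hsep ω hωA ω' hω'A))
  let N : ℚ → Set Ω := fun r =>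
    if P (A ∩ {ω | Y ω < r}) = 0 then A ∩ {ω | Y ω < r} else Aᶜ ∩ {ω | r < Y ω}
  have hN0 : ∀ r, P (N r) = 0 := fun r => by
    unfold N; split_ifs with h
    exacts [h, (hnull r).resolve_left h]
  refine ⟨hA, ⋃ r, N r, measure_iUnion_null hN0, fun ω hω hωN ω' hω' hω'N => ?_⟩
  by_contra! hlt
  obtain ⟨r, hωr, hrω'⟩ := exists_rat_btwn hlt
  by_cases h : P (A ∩ {ω | Y ω < r}) = 0
  · exact hωN (mem_iUnion_of_mem r (by simp only [N, if_pos h]; exact ⟨hω, hωr⟩))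
  · exact hω'N (mem_iUnion_of_mem r (by simp only [N, if_neg h]; exact ⟨hω', hrω'⟩))

theorem comonotonePair_of_null {N : Set Ω} (hN : P N = 0)
    (h : ∀ ω ∉ N, ∀ ω' ∉ N, Z ω' < Z ω → Y ω' ≤ Y ω) : ComonotonePair P Y Z := by
  have hae := measure_eq_zero_iff_ae_notMem.1 hN
  filter_upwards [Measure.quasiMeasurePreserving_fst.ae hae,
    Measure.quasiMeasurePreserving_snd.ae hae] with w h₁ h₂
  rcases lt_trichotomy (Z w.2) (Z w.1) with hlt | heq | hgt
  · exact mul_nonneg (sub_nonneg.2 (h _ h₁ _ h₂ hlt)) (sub_nonneg.2 hlt.le)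
  · simp [heq]
  · exact mul_nonneg_of_nonpos_of_nonpos (sub_nonpos.2 (h _ h₂ _ h₁ hgt)) (sub_nonpos.2 hgt.le)

end Comonotone

section CommonTail

variable {Ω ι : Type*} [MeasurableSpace Ω] {P : Measure Ω} {X : ι → Ω → ℝ} {A B E : Set Ω}

/-- Measurability is part of the definition so that it is not lost when the family `X` is
empty. -/
def IsCommonTail (P : Measure Ω) (X : ι → Ω → ℝ) (A : Set Ω) : Prop :=
  MeasurableSet A ∧ ∀ i, IsTailEvent P (X i) A

theorem IsCommonTail.inter (hA : IsCommonTail P X A) (hB : IsCommonTail P X B) :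
    IsCommonTail P X (A ∩ B) :=
  ⟨hA.1.inter hB.1, fun i => (hA.2 i).inter (hB.2 i)⟩

theorem IsCommonTail.iInter {κ : Type*} [Countable κ] {A : κ → Set Ω}
    (h : ∀ k, IsCommonTail P X (A k)) : IsCommonTail P X (⋂ k, A k) :=
  ⟨.iInter fun k => (h k).1, fun i => .iInter fun k => (h k).2 i⟩

theorem IsCommonTail.iUnion {κ : Type*} [Countable κ] {A : κ → Set Ω}
    (h : ∀ k, IsCommonTail P X (A k)) : IsCommonTail P X (⋃ k, A k) :=
  ⟨.iUnion fun k => (h k).1, fun i => .iUnion fun k => (h k).2 i⟩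

theorem IsCommonTail.compl_neg (h : IsCommonTail P X A) :
    IsCommonTail P (fun i ω => -X i ω) Aᶜ :=
  ⟨h.1.compl, fun i => (h.2 i).compl_neg⟩

theorem IsCommonTail.exists_subset_measure_eq (hP : Atomless P) (hA : IsCommonTail P X A)
    (hE : IsCommonTail P X E) (hAE : P A ≤ P E) :
    ∃ B, IsCommonTail P X B ∧ P B = P A ∧ A ∩ E ⊆ B ∧ B ⊆ E := by
  by_cases hnull : P (A \ E) = 0
  · refine ⟨A ∩ E, hA.inter hE, ?_, subset_rfl, inter_subset_right⟩
    rw [← measure_inter_add_sdiff A hE.1, hnull, add_zero]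
  -- Otherwise every `X i` is essentially constant on `E \ A`, so `A ∩ E` may be filled up with
  -- any part of `E \ A`.
  have hfill : P A - P (A ∩ E) ≤ P (E \ A) := by
    rw [tsub_le_iff_right, inter_comm, measure_sdiff_add_inter E hA.1]
    exact hAE
  obtain ⟨B₀, hB₀E, hB₀, hB₀P⟩ := hP (E \ A) (hE.1.diff hA.1) _ hfill
  have hB : MeasurableSet (A ∩ E ∪ B₀) := (hA.1.inter hE.1).union hB₀
  have hBE : A ∩ E ∪ B₀ ⊆ E := union_subset inter_subset_right (hB₀E.trans sdiff_subset)
  refine ⟨A ∩ E ∪ B₀, ⟨hB, fun i => ?_⟩, ?_, subset_union_left, hBE⟩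
  · refine ((hA.2 i).inter (hE.2 i)).of_subset_of_subset (hE.2 i) hB subset_union_left hBE ?_
    rw [sdiff_inter_self_eq_sdiff]
    exact (hA.2 i).exists_null_le_on_sdiff (hE.2 i) hnull
  · have hdisj : Disjoint (A ∩ E) B₀ :=
      disjoint_left.2 fun ω hω hωB => (hB₀E hωB).2 hω.1
    rw [measure_union hdisj hB₀, hB₀P, add_tsub_cancel_of_le (measure_mono inter_subset_left)]

theorem IsCommonTail.exists_between [IsProbabilityMeasure P] (hP : Atomless P)
    (hA : IsCommonTail P X A) {Al Ar : Set Ω} (hAl : IsCommonTail P X Al)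
    (hAr : IsCommonTail P X Ar) (hrl : Ar ⊆ Al) (hArA : P Ar ≤ P A) (hAAl : P A ≤ P Al) :
    ∃ B, IsCommonTail P X B ∧ P B = P A ∧ Ar ⊆ B ∧ B ⊆ Al := by
  obtain ⟨B₁, hB₁, hB₁P, hB₁l, hB₁r⟩ := hA.exists_subset_measure_eq hP hAl hAAl
  -- The lower bound `Ar` is enforced by the same construction on complements, for `-X`.
  have hcompl : P B₁ᶜ ≤ P Arᶜ := by
    rw [prob_compl_eq_one_sub hB₁.1, prob_compl_eq_one_sub hAr.1, hB₁P]
    exact tsub_le_tsub_left hArA 1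
  obtain ⟨B₂, hB₂, hB₂P, hB₂l, hB₂r⟩ :=
    hB₁.compl_neg.exists_subset_measure_eq hP hAr.compl_neg hcompl
  refine ⟨B₂ᶜ, by simpa using hB₂.compl_neg, ?_, subset_compl_comm.1 hB₂r, fun ω hω => ?_⟩
  · rw [prob_compl_eq_one_sub hB₂.1, hB₂P, prob_compl_eq_one_sub hB₁.1,
      ENNReal.sub_sub_cancel ENNReal.one_ne_top prob_le_one, hB₁P]
  · by_contra hωl
    exact hω (hB₂l ⟨fun h => hωl (hB₁r h), fun h => hωl (hrl h)⟩)

end CommonTail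

section TailChain

variable {Ω ι : Type*} [MeasurableSpace Ω] {P : Measure Ω} {X : ι → Ω → ℝ} {S : Set ℝ}
  {A : ℝ → Set Ω}

def IsTailChainOn (P : Measure Ω) (X : ι → Ω → ℝ) (S : Set ℝ) (A : ℝ → Set Ω) : Prop :=
  (∀ q ∈ S, IsCommonTail P X (A q) ∧ P (A q) = ENNReal.ofReal (1 - q)) ∧
    ∀ q ∈ S, ∀ r ∈ S, q ≤ r → A r ⊆ A q

theorem IsTailChainOn.measure_iUnion_gt (hS : S.Countable) (hA : IsTailChainOn P X S A)
    (x : ℝ) :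
    P (⋃ r : {r // r ∈ S ∧ x < r}, A r) = ⨆ r : {r // r ∈ S ∧ x < r}, ENNReal.ofReal (1 - r) := by
  have : Countable {r // r ∈ S ∧ x < r} := (hS.mono fun _ hr => hr.1).to_subtype
  have hanti : Antitone fun r : {r // r ∈ S ∧ x < r} => A r :=
    fun r r' h => hA.2 r r.2.1 r' r'.2.1 h
  rw [hanti.directed_le.measure_iUnion]
  exact iSup_congr fun r => (hA.1 r r.2.1).2

theorem IsTailChainOn.ofReal_le_measure_iInter_lt [IsProbabilityMeasure P] (hS : S.Countable)
    (hA : IsTailChainOn P X S A) {x : ℝ} (hx : 0 ≤ x) :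
    ENNReal.ofReal (1 - x) ≤ P (⋂ r : {r // r ∈ S ∧ r < x}, A r) := by
  have : Countable {r // r ∈ S ∧ r < x} := (hS.mono fun _ hr => hr.1).to_subtype
  rcases isEmpty_or_nonempty {r // r ∈ S ∧ r < x} with hempty | hne
  · rw [iInter_of_empty, measure_univ]
    exact ENNReal.ofReal_le_one.2 (by linarith)
  obtain ⟨r₀⟩ := hne
  have hanti : Antitone fun r : {r // r ∈ S ∧ r < x} => A r :=
    fun r r' h => hA.2 r r.2.1 r' r'.2.1 h
  rw [Directed.measure_iInter (s := fun r : {r // r ∈ S ∧ r < x} => A r)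
    (fun r => (hA.1 r r.2.1).1.1.nullMeasurableSet) hanti.directed_ge ⟨r₀, measure_ne_top P _⟩]
  refine le_iInf fun r => ?_
  rw [(hA.1 r r.2.1).2]
  exact ENNReal.ofReal_le_ofReal (by linarith [r.2.2])

theorem IsTailChainOn.exists_extend [IsProbabilityMeasure P] (hP : Atomless P)
    (hS : S.Countable) (hA : IsTailChainOn P X S A) {q : ℝ}
    (hq : ∃ B, IsCommonTail P X B ∧ P B = ENNReal.ofReal (1 - q)) :
    ∃ A', EqOn A' A S ∧ IsTailChainOn P X (insert q S) A' := by
  by_cases hqS : q ∈ S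
  · exact ⟨A, eqOn_refl A S, by rwa [insert_eq_of_mem hqS]⟩
  obtain ⟨B₀, hB₀, hB₀P⟩ := hq
  have hq0 : 0 ≤ q := by
    have := hB₀P ▸ prob_le_one (μ := P) (s := B₀)
    linarith [ENNReal.ofReal_le_one.1 this]
  have : Countable {r // r ∈ S ∧ r < q} := (hS.mono fun _ hr => hr.1).to_subtype
  have : Countable {r // r ∈ S ∧ q < r} := (hS.mono fun _ hr => hr.1).to_subtype
  -- `B` is squeezed between the events at the levels of `S` just above and just below `q`.
  obtain ⟨B, hB, hBP, hArB, hBAl⟩ := hB₀.exists_between hP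
    (IsCommonTail.iInter fun r : {r // r ∈ S ∧ r < q} => (hA.1 r r.2.1).1)
    (IsCommonTail.iUnion fun r : {r // r ∈ S ∧ q < r} => (hA.1 r r.2.1).1)
    (iUnion_subset fun r => subset_iInter fun r' =>
      hA.2 r' r'.2.1 r r.2.1 (r'.2.2.trans r.2.2).le)
    (by
      rw [hB₀P, hA.measure_iUnion_gt hS]
      exact iSup_le fun r => ENNReal.ofReal_le_ofReal (by linarith [r.2.2]))
    (hB₀P ▸ hA.ofReal_le_measure_iInter_lt hS hq0)
  have hne : ∀ r ∈ S, r ≠ q := fun r hr h => hqS (h ▸ hr)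
  refine ⟨Function.update A q B, fun r hr => Function.update_of_ne (hne r hr) _ _, ?_, ?_⟩
  · rintro r (rfl | hr)
    · rw [Function.update_self]
      exact ⟨hB, hBP.trans hB₀P⟩
    · rw [Function.update_of_ne (hne r hr)]
      exact hA.1 r hr
  · rintro r (rfl | hr) r' (rfl | hr') hrr'
    · exact subset_rfl
    · rw [Function.update_self, Function.update_of_ne (hne r' hr')]
      exact (subset_iUnion (fun s : {s // s ∈ S ∧ r < s} => A s)
        ⟨r', hr', hrr'.lt_of_ne (hne r' hr').symm⟩).trans hArB
    · rw [Function.update_self, Function.update_of_ne (hne r hr)]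
      exact hBAl.trans (iInter_subset (fun s : {s // s ∈ S ∧ s < r'} => A s)
        ⟨r, hr, hrr'.lt_of_ne (hne r hr)⟩)
    · rw [Function.update_of_ne (hne r hr), Function.update_of_ne (hne r' hr')]
      exact hA.2 r hr r' hr' hrr'

/-- Chains on the finite initial segments of an enumeration of `D` are built one level at a
time; each level is fixed once it has been added, which gives a chain on all of `D`. -/
theorem exists_isTailChainOn [IsProbabilityMeasure P] (hP : Atomless P) {D : Set ℝ}
    (hD : D.Countable) (h : ∀ q ∈ D, ∃ B, IsCommonTail P X B ∧ P B = ENNReal.ofReal (1 - q)) :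
    ∃ A, IsTailChainOn P X D A := by
  rcases D.eq_empty_or_nonempty with rfl | hne
  · exact ⟨fun _ => ∅, by simp [IsTailChainOn]⟩
  obtain ⟨p, rfl⟩ := hD.exists_eq_range hne
  have step : ∀ n (A : ℝ → Set Ω), ∃ A', IsTailChainOn P X (p '' Iio n) A →
      EqOn A' A (p '' Iio n) ∧ IsTailChainOn P X (p '' Iio (n + 1)) A' := by
    intro n A
    by_cases hA : IsTailChainOn P X (p '' Iio n) A
    · obtain ⟨A', hA'⟩ :=
        hA.exists_extend hP ((finite_Iio n).image p).countable (h _ (mem_range_self n))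
      refine ⟨A', fun _ => ?_⟩
      rwa [← Order.succ_eq_add_one, Order.Iio_succ_eq_insert, image_insert_eq]
    · exact ⟨A, fun h' => absurd h' hA⟩
  choose next hnext using step
  let F : ℕ → ℝ → Set Ω := fun n => Nat.rec (motive := fun _ => ℝ → Set Ω) (fun _ => ∅) next n
  have hF : ∀ n, IsTailChainOn P X (p '' Iio n) (F n) := by
    intro n
    induction n with
    | zero => simp [IsTailChainOn]
    | succ n ih => exact (hnext n (F n) ih).2
  have hstable : ∀ m n, m ≤ n → EqOn (F n) (F m) (p '' Iio m) := by
    intro m n hmn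
    induction n, hmn using Nat.le_induction with
    | base => exact eqOn_refl _ _
    | succ n hmn ih =>
      exact ((hnext n (F n) (hF n)).1.mono (image_mono (Iio_subset_Iio hmn))).trans ih
  let k : ℝ → ℕ := Function.invFun p
  have hlim : ∀ q ∈ range p, ∀ n, k q < n → F (k q + 1) q = F n q ∧ q ∈ p '' Iio n :=
    fun q hq n hn => have hkq : p (k q) = q := Function.invFun_eq hq
      ⟨(hstable _ n hn ⟨k q, Nat.lt_succ_self _, hkq⟩).symm, ⟨k q, hn, hkq⟩⟩
  refine ⟨fun q => F (k q + 1) q, fun q hq => ?_, fun q hq r hr hqr => ?_⟩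
  · obtain ⟨-, hqn⟩ := hlim q hq _ (Nat.lt_succ_self _)
    exact (hF _).1 q hqn
  · obtain ⟨hFq, hqn⟩ := hlim q hq (max (k q) (k r) + 1) (by omega)
    obtain ⟨hFr, hrn⟩ := hlim r hr (max (k q) (k r) + 1) (by omega)
    simp only [hFq, hFr]
    exact (hF _).2 q hqn r hrn hqr

end TailChain

section VK

variable {K D : Set ℝ} {s x : ℝ}

theorem VK_nonneg (K : Set ℝ) (s : ℝ) : 0 ≤ VK K s :=
  Real.sSup_nonneg fun _ hk => hk.1.1.le

theorem VK_le_self (K : Set ℝ) (hs : 0 ≤ s) : VK K s ≤ s :=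
  Real.sSup_le (fun _ hk => hk.1.2.le) hs

theorem le_VK {k : ℝ} (hk : k ∈ K) (hk0 : 0 < k) (hks : k < s) : k ≤ VK K s :=
  le_csSup ((bddAbove_Ioo (a := 0) (b := s)).mono inter_subset_left) ⟨⟨hk0, hks⟩, hk⟩

theorem VK_le_iff (hx : 0 ≤ x) : VK K s ≤ x ↔ K ∩ Ioo x s = ∅ := by
  refine ⟨fun h => eq_empty_of_forall_notMem fun k ⟨hk, hxk, hks⟩ => ?_, fun h => ?_⟩
  · linarith [le_VK hk (hx.trans_lt hxk) hks]
  · refine Real.sSup_le (fun k ⟨⟨_, hks⟩, hk⟩ => not_lt.1 fun hxk => ?_) hx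
    exact (h ▸ ⟨hk, hxk, hks⟩ : k ∈ (∅ : Set ℝ))

theorem VK_eq_of_subset_closure (hDK : D ⊆ K) (hKD : K ∩ Ioo 0 1 ⊆ closure D) (hs : s ≤ 1) :
    VK D s = VK K s := by
  refine le_antisymm ((VK_le_iff (VK_nonneg K s)).2 ?_) ((VK_le_iff (VK_nonneg D s)).2 ?_)
  · exact subset_empty_iff.1 (((VK_le_iff (VK_nonneg K s)).1 le_rfl) ▸
      inter_subset_inter_left _ hDK)
  · have hD := (VK_le_iff (VK_nonneg D s)).1 le_rfl
    refine eq_empty_of_forall_notMem fun k ⟨hk, hxk, hks⟩ => ?_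
    have hkD : (closure D ∩ Ioo (VK D s) s).Nonempty :=
      ⟨k, hKD ⟨hk, (VK_nonneg D s).trans_lt hxk, hks.trans_le hs⟩, hxk, hks⟩
    rw [closure_inter_open_nonempty_iff isOpen_Ioo, hD] at hkD
    exact not_nonempty_empty hkD

end VK

theorem ofReal_le_prob_compl_iff {Ω : Type*} [MeasurableSpace Ω] {P : Measure Ω}
    [IsProbabilityMeasure P] {E : Set Ω} (hE : MeasurableSet E) {s : ℝ} (hs0 : 0 ≤ s)
    (hs1 : s ≤ 1) : ENNReal.ofReal s ≤ P Eᶜ ↔ P E ≤ ENNReal.ofReal (1 - s) := by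
  rw [prob_compl_eq_one_sub hE, ENNReal.ofReal_sub 1 hs0, ENNReal.ofReal_one,
    ENNReal.le_sub_iff_add_le_right (measure_ne_top P E) prob_le_one,
    ENNReal.le_sub_iff_add_le_left ENNReal.ofReal_ne_top (ENNReal.ofReal_le_one.2 hs1)]

section ChainLevel

variable {Ω ι : Type*} {D : Set ℝ} {A : ℝ → Set Ω} {x : ℝ}

/-- Since `sSup ∅ = 0`, the level is `0` when `ω` lies in no `A q`. -/
noncomputable def chainLevel (D : Set ℝ) (A : ℝ → Set Ω) (ω : Ω) : ℝ :=
  sSup {q ∈ D | ω ∈ A q}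

theorem chainLevel_nonneg (hD : D ⊆ Icc 0 1) (ω : Ω) : 0 ≤ chainLevel D A ω :=
  Real.sSup_nonneg fun _ hq => (hD hq.1).1

theorem lt_chainLevel_iff (hD : D ⊆ Icc 0 1) (hx : 0 ≤ x) {ω : Ω} :
    x < chainLevel D A ω ↔ ∃ q ∈ D, ω ∈ A q ∧ x < q := by
  rcases eq_empty_or_nonempty {q ∈ D | ω ∈ A q} with h | h
  · simp only [chainLevel, h, Real.sSup_empty]
    exact iff_of_false hx.not_gt fun ⟨q, hq, hωq, _⟩ => h.subset ⟨hq, hωq⟩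
  · rw [chainLevel, lt_csSup_iff ⟨1, fun q hq => (hD hq.1).2⟩ h]
    simp only [mem_sep_iff, and_assoc]

theorem setOf_lt_chainLevel (hD : D ⊆ Icc 0 1) (hx : 0 ≤ x) :
    {ω | x < chainLevel D A ω} = ⋃ r : {r // r ∈ D ∧ x < r}, A r := by
  ext ω
  simp only [mem_ofPred_eq, lt_chainLevel_iff hD hx, mem_iUnion, Subtype.exists]
  grind

theorem setOf_chainLevel_le_of_neg (hD : D ⊆ Icc 0 1) (hx : x < 0) :
    {ω | chainLevel D A ω ≤ x} = ∅ :=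
  eq_empty_of_forall_notMem fun ω hω => (hx.trans_le (chainLevel_nonneg hD ω)).not_ge hω

variable [MeasurableSpace Ω] {P : Measure Ω} {X : ι → Ω → ℝ}

theorem IsTailChainOn.measurableSet_lt_chainLevel (hD : D ⊆ Icc 0 1) (hDc : D.Countable)
    (hA : IsTailChainOn P X D A) (hx : 0 ≤ x) : MeasurableSet {ω | x < chainLevel D A ω} := by
  have : Countable {r // r ∈ D ∧ x < r} := (hDc.mono fun _ hr => hr.1).to_subtype
  rw [setOf_lt_chainLevel hD hx]
  exact .iUnion fun r => (hA.1 r r.2.1).1.1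

theorem IsTailChainOn.measurable_chainLevel (hD : D ⊆ Icc 0 1) (hDc : D.Countable)
    (hA : IsTailChainOn P X D A) : Measurable (chainLevel D A) := by
  refine measurable_of_Ioi fun x => ?_
  rcases lt_or_ge x 0 with hx | hx
  · rw [eq_univ_of_forall (s := chainLevel D A ⁻¹' Ioi x) fun ω =>
      hx.trans_le (chainLevel_nonneg hD ω)]
    exact .univ
  · exact hA.measurableSet_lt_chainLevel hD hDc hx

theorem IsTailChainOn.comonotonePair_chainLevel (hD : D ⊆ Icc 0 1) (hDc : D.Countable)
    (hA : IsTailChainOn P X D A) (i : ι) : ComonotonePair P (X i) (chainLevel D A) := by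
  have : Countable D := hDc.to_subtype
  obtain ⟨N, hN0, hN⟩ := exists_common_null_of_isTailEvent (P := P) (Y := fun _ : D => X i)
    fun q => (hA.1 q q.2).1.2 i
  refine comonotonePair_of_null hN0 fun ω hω ω' hω' hlt => ?_
  obtain ⟨q, hqD, hωq, hq⟩ := (lt_chainLevel_iff hD (chainLevel_nonneg hD ω')).1 hlt
  have hω'q : ω' ∉ A q := fun h =>
    lt_irrefl _ ((lt_chainLevel_iff hD (chainLevel_nonneg hD ω')).2 ⟨q, hqD, h, hq⟩)
  exact hN ⟨q, hqD⟩ ω hωq hω ω' hω'q hω'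

variable [IsProbabilityMeasure P]

theorem IsTailChainOn.ofReal_le_measure_chainLevel_le_iff (hD : D ⊆ Icc 0 1)
    (hDc : D.Countable) (hA : IsTailChainOn P X D A) {s : ℝ} (hs : s ∈ Ioc 0 1) (x : ℝ) :
    ENNReal.ofReal s ≤ P {ω | chainLevel D A ω ≤ x} ↔ VK D s ≤ x := by
  rcases lt_or_ge x 0 with hx | hx
  · rw [setOf_chainLevel_le_of_neg hD hx, measure_empty]
    exact iff_of_false (by simpa using hs.1) (hx.trans_le (VK_nonneg D s)).not_ge
  have hcompl : {ω | chainLevel D A ω ≤ x} = {ω | x < chainLevel D A ω}ᶜ := by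
    ext; simp
  rw [hcompl, ofReal_le_prob_compl_iff (hA.measurableSet_lt_chainLevel hD hDc hx) hs.1.le hs.2,
    setOf_lt_chainLevel hD hx, hA.measure_iUnion_gt hDc, iSup_le_iff, VK_le_iff hx,
    eq_empty_iff_forall_notMem]
  simp only [Subtype.forall, ENNReal.ofReal_le_ofReal_iff (sub_nonneg.2 hs.2),
    sub_le_sub_iff_left, mem_inter_iff, mem_Ioo, not_and, not_lt]
  grind

theorem IsTailChainOn.Q_chainLevel (hD : D ⊆ Icc 0 1) (hDc : D.Countable)
    (hA : IsTailChainOn P X D A) {s : ℝ} (hs : s ∈ Icc 0 1) :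
    Q P (chainLevel D A) s = VK D s := by
  rcases hs.1.eq_or_lt with rfl | hs0
  · rw [Q, if_pos rfl, rightQuantile, VK, Ioo_self, empty_inter, Real.sSup_empty,
      ENNReal.ofReal_zero]
    -- `P(Z ≤ 0)` vanishes when `D` accumulates at `0`, so the set below may be `Ioi 0`.
    have hIoi : Ioi 0 ⊆ {x | 0 < P {ω | chainLevel D A ω ≤ x}} := fun x hx => by
      have hm : min x 1 ∈ Ioc 0 1 := ⟨lt_min hx one_pos, min_le_right _ _⟩
      exact (ENNReal.ofReal_pos.2 hm.1).trans_le <|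
        (hA.ofReal_le_measure_chainLevel_le_iff hD hDc hm x).2 <|
          (VK_le_self D hm.1.le).trans (min_le_left _ _)
    have hIci : {x | 0 < P {ω | chainLevel D A ω ≤ x}} ⊆ Ici 0 := fun x hx =>
      not_lt.1 fun hx0 => by
        rw [mem_ofPred_eq, setOf_chainLevel_le_of_neg hD hx0, measure_empty] at hx
        exact lt_irrefl 0 hx
    exact le_antisymm ((csInf_le_csInf ⟨0, hIci⟩ nonempty_Ioi hIoi).trans_eq csInf_Ioi)
      (le_csInf ⟨1, hIoi (mem_Ioi.2 one_pos)⟩ hIci)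
  · rw [Q, if_neg hs0.ne', leftQuantile, ← csInf_Ici (a := VK D s)]
    exact congrArg sInf (ext (hA.ofReal_le_measure_chainLevel_le_iff hD hDc ⟨hs0, hs.2⟩))

end ChainLevel

section Quantile

variable {Ω : Type*} [MeasurableSpace Ω] {P : Measure Ω} {Z : Ω → ℝ} {s c : ℝ}

theorem leftQuantile_eq_of_measure_lt_of_le (hlt : P {ω | Z ω < c} < ENNReal.ofReal s)
    (hle : ENNReal.ofReal s ≤ P {ω | Z ω ≤ c}) : leftQuantile P Z s = c :=
  IsLeast.csInf_eq ⟨hle, fun _ hx => not_lt.1 fun hxc =>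
    (hx.trans (measure_mono fun _ hω => lt_of_le_of_lt hω hxc)).not_gt hlt⟩

variable [IsProbabilityMeasure P]

theorem nonempty_setOf_ofReal_le_measure_le (hs : s < 1) :
    {x | ENNReal.ofReal s ≤ P {ω | Z ω ≤ x}}.Nonempty := by
  have hmono : Monotone fun x : ℝ => {ω | Z ω ≤ x} := fun _ _ h _ hω => le_trans hω h
  have h1 : ⨆ x : ℝ, P {ω | Z ω ≤ x} = 1 := by
    rw [← hmono.measure_iUnion, iUnion_eq_univ_iff.2 fun ω => ⟨Z ω, show Z ω ≤ Z ω from le_rfl⟩,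
      measure_univ]
  obtain ⟨x, hx⟩ := lt_iSup_iff.1 (h1 ▸ ENNReal.ofReal_lt_one.2 hs)
  exact ⟨x, hx.le⟩

theorem bddBelow_setOf_ofReal_le_measure_le (hZ : Measurable Z) (hs : 0 < s) :
    BddBelow {x | ENNReal.ofReal s ≤ P {ω | Z ω ≤ x}} := by
  have hmono : Monotone fun x : ℝ => {ω | Z ω ≤ x} := fun _ _ h _ hω => le_trans hω h
  have h0 : ⨅ x : ℝ, P {ω | Z ω ≤ x} = 0 := by
    rw [← hmono.measure_iInter (fun _ => (measurableSet_le hZ measurable_const).nullMeasurableSet)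
      ⟨0, measure_ne_top P _⟩, iInter_eq_empty_iff.2 fun ω => ⟨Z ω - 1, by simp⟩, measure_empty]
  obtain ⟨x₀, hx₀⟩ := iInf_lt_iff.1 (h0 ▸ ENNReal.ofReal_pos.2 hs)
  exact ⟨x₀, fun x hx => not_lt.1 fun hxx₀ =>
    (hx.trans (measure_mono fun _ hω => hω.trans hxx₀.le)).not_gt hx₀⟩

theorem ofReal_le_measure_le_leftQuantile (hZ : Measurable Z) (hs : s < 1) :
    ENNReal.ofReal s ≤ P {ω | Z ω ≤ leftQuantile P Z s} := by
  set c := leftQuantile P Z s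
  have hc : {ω | Z ω ≤ c} = ⋂ x : Ioi c, {ω | Z ω ≤ x} := by
    ext ω
    simp only [mem_ofPred_eq, mem_iInter, Subtype.forall, mem_Ioi]
    exact ⟨fun h x hx => h.trans hx.le, fun h => le_of_forall_gt_imp_ge_of_dense h⟩
  rw [hc, Monotone.measure_iInter (s := fun x : Ioi c => {ω | Z ω ≤ x})
    (fun _ _ h _ hω => le_trans (a := Z _) hω h)
    (fun _ => (measurableSet_le hZ measurable_const).nullMeasurableSet)
    ⟨⟨c + 1, lt_add_one c⟩, measure_ne_top P _⟩]
  refine le_iInf fun x => ?_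
  obtain ⟨y, hy, hyx⟩ := exists_lt_of_csInf_lt (nonempty_setOf_ofReal_le_measure_le hs) x.2
  exact hy.trans (measure_mono fun _ hω => hω.trans hyx.le)

theorem measure_lt_leftQuantile_le (hZ : Measurable Z) (hs : 0 < s) :
    P {ω | Z ω < leftQuantile P Z s} ≤ ENNReal.ofReal s := by
  set c := leftQuantile P Z s
  have hc : {ω | Z ω < c} = ⋃ x : Iio c, {ω | Z ω ≤ x} := by
    ext ω
    simp only [mem_ofPred_eq, mem_iUnion, Subtype.exists, mem_Iio, exists_prop]
    exact ⟨fun h => (exists_between h).imp fun _ hx => ⟨hx.2, hx.1.le⟩,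
      fun ⟨_, hx, hωx⟩ => hωx.trans_lt hx⟩
  rw [hc, Monotone.measure_iUnion (s := fun x : Iio c => {ω | Z ω ≤ x})
    (fun _ _ h _ hω => le_trans (a := Z _) hω h)]
  exact iSup_le fun x => le_of_lt <| lt_of_not_ge fun hx =>
    x.2.not_ge (csInf_le (bddBelow_setOf_ofReal_le_measure_le hZ hs) hx)

/-- If neither holds, `Q_Z` is constant on an interval around `p`, while `VK K` lies below the
identity before `p` and is at least `p` after `p`. -/
theorem measure_lt_or_measure_le_eq_of_leftQuantile_eq_VK (hZ : Measurable Z) {K : Set ℝ}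
    (hQ : ∀ s ∈ Ioc (0 : ℝ) 1, leftQuantile P Z s = VK K s) {p : ℝ} (hpK : p ∈ K)
    (hp : p ∈ Ioo 0 1) :
    P {ω | Z ω < VK K p} = ENNReal.ofReal p ∨ P {ω | Z ω ≤ VK K p} = ENNReal.ofReal p := by
  rw [← hQ p (Ioo_subset_Ioc_self hp)]
  set c := leftQuantile P Z p
  by_contra! h
  have hL := (measure_lt_leftQuantile_le hZ hp.1).lt_of_ne h.1
  have hR := (ofReal_le_measure_le_leftQuantile hZ hp.2).lt_of_ne h.2.symm
  have hconst : ∀ s ∈ Ioc (0 : ℝ) 1, P {ω | Z ω < c} < ENNReal.ofReal s →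
      ENNReal.ofReal s ≤ P {ω | Z ω ≤ c} → VK K s = c := fun s hs h₁ h₂ =>
    (hQ s hs).symm.trans (leftQuantile_eq_of_measure_lt_of_le h₁ h₂)
  have hRtop : P {ω | Z ω ≤ c} ≠ ⊤ := measure_ne_top P _
  have hpR : p < (P {ω | Z ω ≤ c}).toReal :=
    (ENNReal.ofReal_lt_iff_lt_toReal hp.1.le hRtop).1 hR
  have hcR := hconst _ ⟨hp.1.trans hpR, ENNReal.toReal_le_of_le_ofReal zero_le_one
      (ENNReal.ofReal_one ▸ prob_le_one)⟩
    (hL.trans_le (ENNReal.ofReal_le_ofReal hpR.le)) (ENNReal.ofReal_toReal hRtop).le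
  have hLp : (P {ω | Z ω < c}).toReal < p :=
    (ENNReal.lt_ofReal_iff_toReal_lt (measure_ne_top P _)).1 hL
  obtain ⟨s, hs, hsp⟩ := exists_between (max_lt hLp hp.1)
  have hcs := hconst s ⟨(le_max_right _ _).trans_lt hs, hsp.le.trans hp.2.le⟩
    ((ENNReal.lt_ofReal_iff_toReal_lt (measure_ne_top P _)).2 ((le_max_left _ _).trans_lt hs))
    ((ENNReal.ofReal_le_ofReal hsp.le).trans hR.le)
  linarith [le_VK hpK hp.1 hpR, VK_le_self K ((le_max_right _ _).trans hs.le)]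

end Quantile

section Concentration

variable {Ω : Type*} [MeasurableSpace Ω] {P : Measure Ω} [IsProbabilityMeasure P] {d : ℕ}
  {X : Fin d → Ω → ℝ} {K : Set ℝ}

theorem pConcentrated_of_comonotonePair {Z : Ω → ℝ} (hco : ∀ i, ComonotonePair P (X i) Z)
    {A : Set Ω} (hA : MeasurableSet A) (hsep : ∀ ω ∈ A, ∀ ω' ∈ Aᶜ, Z ω' < Z ω) {p : ℝ}
    (hp : 0 ≤ p) (hAc : P Aᶜ = ENNReal.ofReal p) : PConcentrated P X p := by
  refine ⟨A, fun i => ⟨.of_comonotonePair (hco i) hA hsep, ?_⟩⟩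
  rw [← compl_compl A, prob_compl_eq_one_sub hA.compl, hAc, ENNReal.ofReal_sub 1 hp,
    ENNReal.ofReal_one]

theorem kConcentrated_of_gComonotone (hK : K ⊆ Icc 0 1) (h : GComonotone P (VK K) X) :
    KConcentrated P X K := by
  obtain ⟨Z, hZ, hQ, hco⟩ := h
  intro p hpK
  rcases (hK hpK).1.eq_or_lt with rfl | hp0
  · exact ⟨univ, fun i => ⟨⟨.univ, ∅, measure_empty, by simp⟩, by simp⟩⟩
  rcases (hK hpK).2.eq_or_lt with rfl | hp1
  · exact ⟨∅, fun i => ⟨⟨.empty, ∅, measure_empty, by simp⟩, by simp⟩⟩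
  have hQ' : ∀ s ∈ Ioc (0 : ℝ) 1, leftQuantile P Z s = VK K s := fun s hs => by
    rw [← hQ s (Ioc_subset_Icc_self hs), Q, if_neg hs.1.ne']
  rcases measure_lt_or_measure_le_eq_of_leftQuantile_eq_VK hZ hQ' hpK ⟨hp0, hp1⟩ with h | h
  · refine pConcentrated_of_comonotonePair hco (measurableSet_le measurable_const hZ)
      (fun ω (hω : VK K p ≤ Z ω) ω' (hω' : ¬VK K p ≤ Z ω') => (not_le.1 hω').trans_le hω)
      hp0.le ?_
    simpa only [compl_ofPred, not_le] using h
  · refine pConcentrated_of_comonotonePair hco (measurableSet_lt measurable_const hZ)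
      (fun ω (hω : VK K p < Z ω) ω' (hω' : ¬VK K p < Z ω') => (not_lt.1 hω').trans_lt hω)
      hp0.le ?_
    simpa only [compl_ofPred, not_lt] using h

theorem PConcentrated.exists_isCommonTail (hP : Atomless P) {q : ℝ} (h : PConcentrated P X q)
    (hq : 0 ≤ q) : ∃ B, IsCommonTail P X B ∧ P B = ENNReal.ofReal (1 - q) := by
  rcases isEmpty_or_nonempty (Fin d) with hd | ⟨⟨i₀⟩⟩
  · obtain ⟨B, -, hB, hBP⟩ := hP univ .univ (ENNReal.ofReal (1 - q))
      (by rw [measure_univ]; exact ENNReal.ofReal_le_one.2 (by linarith))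
    exact ⟨B, ⟨hB, isEmptyElim⟩, hBP⟩
  · obtain ⟨B, hB⟩ := h
    exact ⟨B, ⟨(hB i₀).1.1, fun i => (hB i).1⟩, (hB i₀).2⟩

theorem gComonotone_of_kConcentrated (hP : Atomless P) (h : KConcentrated P X K) :
    GComonotone P (VK K) X := by
  obtain ⟨D, hDK, hDc, hKD⟩ :=
    (TopologicalSpace.IsSeparable.of_separableSpace (K ∩ Ioo 0 1)).exists_countable_dense_subset
  have hD : D ⊆ Icc 0 1 := fun q hq => Ioo_subset_Icc_self (hDK hq).2
  obtain ⟨A, hA⟩ := exists_isTailChainOn hP hDc fun q hq =>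
    (h q (hDK hq).1).exists_isCommonTail hP (hDK hq).2.1.le
  refine ⟨chainLevel D A, hA.measurable_chainLevel hD hDc, fun s hs => ?_,
    hA.comonotonePair_chainLevel hD hDc⟩
  rw [hA.Q_chainLevel hD hDc hs, VK_eq_of_subset_closure (hDK.trans inter_subset_left) hKD hs.2]

end Concentration

theorem stmt_14_general {Ω : Type*} [MeasurableSpace Ω] (P : MeasureTheory.Measure Ω)
    [MeasureTheory.IsProbabilityMeasure P] (hP : Atomless P)
    (K : Set ℝ) (hK : K ⊆ Icc 0 1)
    {d : ℕ} (X : Fin d → Ω → ℝ) :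
    KConcentrated P X K ↔ GComonotone P (VK K) X :=
  ⟨gComonotone_of_kConcentrated hP, kConcentrated_of_gComonotone hK⟩

/-- For closed `K ⊆ [0,1]`, a random vector is `K`-concentrated iff it
is `𝒱(K)`-comonotonic. -/
theorem stmt_14 {Ω : Type*} [MeasurableSpace Ω] (P : MeasureTheory.Measure Ω)
    [MeasureTheory.IsProbabilityMeasure P] (hP : Atomless P)
    (K : Set ℝ) (hKc : IsClosed K) (hK : K ⊆ Icc 0 1)
    {d : ℕ} (X : Fin d → Ω → ℝ) (hX : ∀ i, Measurable (X i)) :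
    KConcentrated P X K ↔ GComonotone P (VK K) X :=
  stmt_14_general P hP K hK X
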